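/- Let r : h* → ∧²g be a triangular dynamical r-matrix and define, for smooth H-invariant (equivalently h-invariant) maps τ : h* → ∧^k g, the operator δ_r τ = Σ_i h_i ∧ ∂τ/∂λ^i + [r, τ]. Then δ_r maps C^∞(h*, (∧^k g)^h) to C^∞(h*, (∧^{k+1} g)^h) and δ_r² = 0. -/

import Mathlib

open Module
set_option maxHeartbeats 1000000

/-- Homogeneity of degree `p` in the exterior algebra `∧•g`. -/
def homogDeg {g : Type} [AddCommGroup g] [Module ℝ g] (p : ℕ)
    (x : ExteriorAlgebra ℝ g) : Prop :=
  x ∈ (LinearMap.range (ExteriorAlgebra.ι ℝ : g →ₗ[ℝ] ExteriorAlgebra ℝ g)) ^ p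

/-- `br` is the (algebraic) Schouten bracket on `∧•g`: the biadditive,
bilinear extension of the Lie bracket of `g` to a Gerstenhaber bracket
(graded antisymmetric, graded Leibniz biderivation of degree `-1`). -/
structure IsSchouten {g : Type} [LieRing g] [LieAlgebra ℝ g]
    (br : ExteriorAlgebra ℝ g → ExteriorAlgebra ℝ g → ExteriorAlgebra ℝ g) :
    Prop where
  add_left : ∀ a b c, br (a + b) c = br a c + br b c
  add_right : ∀ a b c, br a (b + c) = br a b + br a c
  smul_left : ∀ (t : ℝ) a b, br (t • a) b = t • br a b
  smul_right : ∀ (t : ℝ) a b, br a (t • b) = t • br a b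
  one_left : ∀ a, br 1 a = 0
  iota_iota : ∀ x y : g,
    br (ExteriorAlgebra.ι ℝ x) (ExteriorAlgebra.ι ℝ y) = ExteriorAlgebra.ι ℝ ⁅x, y⁆
  deg : ∀ (p q : ℕ) a b, homogDeg p a → homogDeg q b → homogDeg (p + q - 1) (br a b)
  antisymm : ∀ (p q : ℕ) a b, homogDeg p a → homogDeg q b →
    br a b = (-(-1 : ℝ) ^ ((p - 1) * (q - 1))) • br b a
  leibniz : ∀ (p q : ℕ) a b c, homogDeg p a → homogDeg q b →
    br a (b * c) = br a b * c + ((-1 : ℝ) ^ ((p - 1) * q)) • (b * br a c)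

/-- Partial derivative of an `∧•g`-valued function, computed through a linear
identification `ee` with a normed space (in finite dimensions the result is
independent of this choice). -/
noncomputable def pdE {g : Type} [AddCommGroup g] [Module ℝ g]
    {W : Type} [NormedAddCommGroup W] [NormedSpace ℝ W]
    (ee : ExteriorAlgebra ℝ g ≃ₗ[ℝ] W) {l : ℕ} (i : Fin l)
    (τ : (Fin l → ℝ) → ExteriorAlgebra ℝ g) (lam : Fin l → ℝ) :
    ExteriorAlgebra ℝ g :=
  ee.symm (fderiv ℝ (fun mu => ee (τ mu)) lam (Pi.single i 1))

/-- The operator `δ_r τ = Σᵢ hᵢ ∧ ∂τ/∂λⁱ + [r, τ]` on maps `h* → ∧•g`. -/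
noncomputable def deltaR {g : Type} [LieRing g] [LieAlgebra ℝ g]
    {W : Type} [NormedAddCommGroup W] [NormedSpace ℝ W]
    (ee : ExteriorAlgebra ℝ g ≃ₗ[ℝ] W) {l : ℕ} (hb : Fin l → g)
    (br : ExteriorAlgebra ℝ g → ExteriorAlgebra ℝ g → ExteriorAlgebra ℝ g)
    (r τ : (Fin l → ℝ) → ExteriorAlgebra ℝ g) :
    (Fin l → ℝ) → ExteriorAlgebra ℝ g :=
  fun lam =>
    (∑ i, ExteriorAlgebra.ι ℝ (hb i) * pdE ee i τ lam) + br (r lam) (τ lam)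


open ExteriorAlgebra in
theorem auxExtFinDim {g : Type} [AddCommGroup g] [Module ℝ g] [FiniteDimensional ℝ g] :
    FiniteDimensional ℝ (ExteriorAlgebra ℝ g) := by
  classical
  set n := Module.finrank ℝ g with hn
  let b : Basis (Fin n) ℝ g := Module.finBasis ℝ g
  let pr : List (Fin n) → ExteriorAlgebra ℝ g := fun L => (L.map fun i => ι ℝ (b i)).prod
  let S : Set (ExteriorAlgebra ℝ g) := {x | ∃ L : List (Fin n), L.Pairwise (· < ·) ∧ x = pr L}
  set P := Submodule.span ℝ S with hP
  have hpr_cons : ∀ (i : Fin n) (L : List (Fin n)), pr (i :: L) = ι ℝ (b i) * pr L := by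
    intro i L; simp [pr]
  -- insertion lemma
  have ins : ∀ (L : List (Fin n)), L.Pairwise (· < ·) → ∀ i : Fin n,
      ι ℝ (b i) * pr L ∈ Submodule.span ℝ
        {x | ∃ M : List (Fin n), M.Pairwise (· < ·) ∧ (∀ k ∈ M, k = i ∨ k ∈ L) ∧ x = pr M} := by
    intro L
    induction L with
    | nil =>
      intro _ i
      refine Submodule.subset_span ⟨[i], by simp, by simp, ?_⟩
      simp [pr]
    | cons j t IH =>
      intro hs i
      have hj : ∀ k ∈ t, j < k := (List.pairwise_cons.mp hs).1
      have ht : t.Pairwise (· < ·) := (List.pairwise_cons.mp hs).2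
      rcases lt_trichotomy i j with hij | hij | hij
      · refine Submodule.subset_span ⟨i :: j :: t, ?_, ?_, rfl⟩
        · refine List.pairwise_cons.mpr ⟨?_, hs⟩
          intro k hk
          rcases List.mem_cons.mp hk with rfl | hk
          · exact hij
          · exact hij.trans (hj k hk)
        · intro k hk
          rcases List.mem_cons.mp hk with rfl | hk
          · exact Or.inl rfl
          · exact Or.inr hk
      · subst hij
        have : ι ℝ (b i) * pr (i :: t) = 0 := by
          rw [hpr_cons, ← mul_assoc, ι_sq_zero, zero_mul]
        rw [this]; exact Submodule.zero_mem _
      · -- j < i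
        have h1 : ι ℝ (b i) * pr (j :: t) = -(ι ℝ (b j) * (ι ℝ (b i) * pr t)) := by
          rw [hpr_cons, ← mul_assoc, ← mul_assoc]
          have := ExteriorAlgebra.ι_add_mul_swap (R := ℝ) (b i) (b j)
          have h2 : ι ℝ (b i) * ι ℝ (b j) = -(ι ℝ (b j) * ι ℝ (b i)) := by
            linear_combination (norm := module) this
          rw [h2, neg_mul]
        rw [h1]
        refine neg_mem ?_
        have hmem := IH ht i
        -- multiply by ι (b j) on the left, mapping generators to generators
        refine Submodule.span_induction (p := fun x _ => ι ℝ (b j) * x ∈ Submodule.span ℝ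
          {x | ∃ M : List (Fin n), M.Pairwise (· < ·) ∧ (∀ k ∈ M, k = i ∨ k ∈ j :: t) ∧ x = pr M})
          ?_ ?_ ?_ ?_ hmem
        · rintro x ⟨M, hM, hMk, rfl⟩
          have hjM : ∀ k ∈ M, j < k := by
            intro k hk
            rcases hMk k hk with rfl | hk'
            · exact hij
            · exact hj k hk'
          refine Submodule.subset_span ⟨j :: M, ?_, ?_, (hpr_cons j M).symm⟩
          · exact List.pairwise_cons.mpr ⟨hjM, hM⟩
          · intro k hk
            rcases List.mem_cons.mp hk with rfl | hk
            · exact Or.inr (List.mem_cons_self)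
            · rcases hMk k hk with rfl | hk'
              · exact Or.inl rfl
              · exact Or.inr (List.mem_cons_of_mem _ hk')
        · simp
        · intro x y _ _ hx hy
          rw [mul_add]; exact add_mem hx hy
        · intro a x _ hx
          rw [mul_smul_comm]; exact Submodule.smul_mem _ a hx
  -- every list product is in P
  have key : ∀ L : List (Fin n), pr L ∈ P := by
    intro L
    induction L with
    | nil => exact Submodule.subset_span ⟨[], by simp, rfl⟩
    | cons i t IH =>
      rw [hpr_cons]
      refine Submodule.span_induction (p := fun x _ => ι ℝ (b i) * x ∈ P) ?_ ?_ ?_ ?_ IH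
      · rintro x ⟨M, hM, rfl⟩
        refine Submodule.span_le.mpr ?_ (ins M hM i)
        rintro x ⟨M', hM', _, rfl⟩
        exact Submodule.subset_span ⟨M', hM', rfl⟩
      · simp
      · intro x y _ _ hx hy; rw [mul_add]; exact add_mem hx hy
      · intro a x _ hx; rw [mul_smul_comm]; exact Submodule.smul_mem _ a hx
  -- P is everything
  have Ptop : ∀ x : ExteriorAlgebra ℝ g, x ∈ P := by
    intro x
    induction x using ExteriorAlgebra.induction with
    | algebraMap r =>
      rw [Algebra.algebraMap_eq_smul_one]
      refine Submodule.smul_mem _ _ ?_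
      have : (1 : ExteriorAlgebra ℝ g) = pr [] := by simp [pr]
      rw [this]; exact key []
    | ι x =>
      have hx : x = ∑ i, (b.repr x) i • b i := (b.sum_repr x).symm
      rw [hx, map_sum]
      refine Submodule.sum_mem _ ?_
      intro i _
      rw [map_smul]
      refine Submodule.smul_mem _ _ ?_
      have : ι ℝ (b i) = pr [i] := by simp [pr]
      rw [this]; exact key [i]
    | mul x y hx hy =>
      have hxy : x * y ∈ P * P := Submodule.mul_mem_mul hx hy
      have : P * P ≤ P := by
        rw [hP, Submodule.span_mul_span]
        refine Submodule.span_le.mpr ?_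
        rintro z ⟨u, hu, v, hv, rfl⟩
        rcases hu with ⟨L1, _, rfl⟩
        rcases hv with ⟨L2, _, rfl⟩
        show pr L1 * pr L2 ∈ _
        have : pr L1 * pr L2 = pr (L1 ++ L2) := by simp [pr]
        rw [this]; exact key _
      exact this hxy
    | add x y hx hy => exact add_mem hx hy
  -- S is finite
  have hSfin : S.Finite := by
    have : S ⊆ pr '' {L : List (Fin n) | L.Pairwise (· < ·)} := by
      rintro x ⟨L, hL, rfl⟩; exact ⟨L, hL, rfl⟩
    refine Set.Finite.subset (Set.Finite.image pr ?_) this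
    refine Set.Finite.of_finite_image (f := fun L => L.toFinset) ?_ ?_
    · exact Set.Finite.subset Set.finite_univ (Set.subset_univ _)
    · intro L1 h1 L2 h2 he
      have hn1 : L1.Nodup := h1.nodup
      have hn2 : L2.Nodup := h2.nodup
      have hperm : List.Perm L1 L2 := List.perm_of_nodup_nodup_toFinset_eq hn1 hn2 he
      exact List.Perm.eq_of_pairwise (fun a b _ _ hab hba => absurd (hab.trans hba) (lt_irrefl _)) h1 h2 hperm
  refine ⟨⟨hSfin.toFinset, ?_⟩⟩
  rw [Set.Finite.coe_toFinset]
  exact Submodule.eq_top_iff'.mpr Ptop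

set_option linter.unusedSectionVars false
section B
variable {g : Type} [AddCommGroup g] [Module ℝ g] [FiniteDimensional ℝ g]
  {W : Type} [NormedAddCommGroup W] [NormedSpace ℝ W]
  (ee : ExteriorAlgebra ℝ g ≃ₗ[ℝ] W) {l : ℕ}

include ee in
theorem auxWFinDim : FiniteDimensional ℝ W := by
  haveI := auxExtFinDim (g := g)
  exact Module.Finite.equiv ee

theorem aux_pdE_linear (T : ExteriorAlgebra ℝ g →ₗ[ℝ] ExteriorAlgebra ℝ g) (i : Fin l)
    (τ : (Fin l → ℝ) → ExteriorAlgebra ℝ g) (lam : Fin l → ℝ)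
    (hτ : DifferentiableAt ℝ (fun mu => ee (τ mu)) lam) :
    pdE ee i (fun mu => T (τ mu)) lam = T (pdE ee i τ lam) := by
  haveI := auxWFinDim ee
  let Tc : W →L[ℝ] W :=
    LinearMap.toContinuousLinearMap (ee.toLinearMap ∘ₗ T ∘ₗ ee.symm.toLinearMap)
  have hTc : ∀ w : W, Tc w = ee (T (ee.symm w)) := fun w => rfl
  have hfun : (fun mu => ee (T (τ mu))) = fun mu => Tc (ee (τ mu)) := by
    funext mu; rw [hTc, ee.symm_apply_apply]
  have hder : fderiv ℝ (fun mu => ee (T (τ mu))) lam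
      = Tc.comp (fderiv ℝ (fun mu => ee (τ mu)) lam) := by
    rw [hfun]
    exact (Tc.hasFDerivAt.comp lam hτ.hasFDerivAt).fderiv
  unfold pdE
  rw [hder]
  simp only [ContinuousLinearMap.coe_comp', Function.comp_apply, hTc, ee.symm_apply_apply]

theorem aux_pdE_const_zero (i : Fin l) (lam : Fin l → ℝ) :
    pdE ee i (fun _ => (0 : ExteriorAlgebra ℝ g)) lam = 0 := by
  unfold pdE
  have : (fun mu : Fin l → ℝ => ee (0 : ExteriorAlgebra ℝ g)) = fun _ => (0 : W) := by
    funext _; simp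
  rw [this, fderiv_fun_const]
  simp

theorem aux_pdE_add (i : Fin l) (τ σ : (Fin l → ℝ) → ExteriorAlgebra ℝ g) (lam : Fin l → ℝ)
    (hτ : DifferentiableAt ℝ (fun mu => ee (τ mu)) lam)
    (hσ : DifferentiableAt ℝ (fun mu => ee (σ mu)) lam) :
    pdE ee i (fun mu => τ mu + σ mu) lam = pdE ee i τ lam + pdE ee i σ lam := by
  unfold pdE
  have : (fun mu => ee (τ mu + σ mu)) = fun mu => ee (τ mu) + ee (σ mu) := by
    funext mu; simp
  rw [this, fderiv_fun_add hτ hσ]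
  simp

theorem aux_pdE_sum {m : ℕ} (i : Fin l) (F : Fin m → (Fin l → ℝ) → ExteriorAlgebra ℝ g)
    (lam : Fin l → ℝ)
    (hF : ∀ j, DifferentiableAt ℝ (fun mu => ee (F j mu)) lam) :
    pdE ee i (fun mu => ∑ j, F j mu) lam = ∑ j, pdE ee i (F j) lam := by
  unfold pdE
  have : (fun mu => ee (∑ j, F j mu)) = fun mu => ∑ j, ee (F j mu) := by
    funext mu; simp
  rw [this, fderiv_fun_sum (fun j _ => hF j)]
  simp

theorem aux_pdE_bilin (B : ExteriorAlgebra ℝ g →ₗ[ℝ] ExteriorAlgebra ℝ g →ₗ[ℝ] ExteriorAlgebra ℝ g)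
    (i : Fin l) (u v : (Fin l → ℝ) → ExteriorAlgebra ℝ g) (lam : Fin l → ℝ)
    (hu : DifferentiableAt ℝ (fun mu => ee (u mu)) lam)
    (hv : DifferentiableAt ℝ (fun mu => ee (v mu)) lam) :
    pdE ee i (fun mu => B (u mu) (v mu)) lam
      = B (pdE ee i u lam) (v lam) + B (u lam) (pdE ee i v lam) := by
  haveI := auxWFinDim ee
  let Bl : W →ₗ[ℝ] W →ₗ[ℝ] W :=
    { toFun := fun w => ee.toLinearMap ∘ₗ (B (ee.symm w)) ∘ₗ ee.symm.toLinearMap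
      map_add' := by intro w1 w2; ext w; simp
      map_smul' := by intro t w; ext w'; simp }
  let Bc : W →L[ℝ] W →L[ℝ] W :=
    LinearMap.toContinuousLinearMap
      ((LinearMap.toContinuousLinearMap :
        (W →ₗ[ℝ] W) ≃ₗ[ℝ] (W →L[ℝ] W)).toLinearMap ∘ₗ Bl)
  have hBc : ∀ w1 w2 : W, Bc w1 w2 = ee (B (ee.symm w1) (ee.symm w2)) := fun w1 w2 => rfl
  set fu := fun mu => ee (u mu) with hfu
  set fv := fun mu => ee (v mu) with hfv
  have hfun : (fun mu => ee (B (u mu) (v mu))) = fun mu => Bc (fu mu) (fv mu) := by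
    funext mu; rw [hBc, ee.symm_apply_apply, ee.symm_apply_apply]
  have hc : HasFDerivAt (fun mu => Bc (fu mu)) (Bc.comp (fderiv ℝ fu lam)) lam :=
    Bc.hasFDerivAt.comp lam hu.hasFDerivAt
  have h2 : HasFDerivAt (fun mu => Bc (fu mu) (fv mu))
      (((Bc (fu lam)).comp (fderiv ℝ fv lam))
        + ((Bc.comp (fderiv ℝ fu lam)).flip (fv lam))) lam :=
    hc.clm_apply hv.hasFDerivAt
  unfold pdE
  rw [hfun, h2.fderiv]
  simp only [ContinuousLinearMap.add_apply, ContinuousLinearMap.coe_comp',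
    Function.comp_apply, ContinuousLinearMap.flip_apply, map_add, hBc,
    ee.symm_apply_apply]
  rw [add_comm]
  simp only [hfu, hfv, ee.symm_apply_apply]

theorem aux_pdE_mem (S : Submodule ℝ (ExteriorAlgebra ℝ g)) (i : Fin l)
    (τ : (Fin l → ℝ) → ExteriorAlgebra ℝ g) (lam : Fin l → ℝ)
    (hτ : DifferentiableAt ℝ (fun mu => ee (τ mu)) lam)
    (hmem : ∀ mu, τ mu ∈ S) :
    pdE ee i τ lam ∈ S := by
  haveI := auxWFinDim ee
  set f := fun mu => ee (τ mu) with hf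
  set v : Fin l → ℝ := Pi.single i 1 with hv
  set Sw : Submodule ℝ W := S.map (ee : ExteriorAlgebra ℝ g →ₗ[ℝ] W) with hSw
  haveI : Module.Finite ℝ Sw := FiniteDimensional.finiteDimensional_submodule Sw
  have hclosed : IsClosed (Sw : Set W) := Sw.closed_of_finiteDimensional
  have hline : HasDerivAt (fun t : ℝ => lam + t • v) v 0 := by
    have h1 : HasDerivAt (fun t : ℝ => t • v) ((1 : ℝ) • v) 0 :=
      (hasDerivAt_id (0 : ℝ)).smul_const v
    simpa using h1.const_add lam
  have hφ : HasDerivAt (fun t : ℝ => f (lam + t • v)) (fderiv ℝ f lam v) 0 := by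
    have hfd : HasFDerivAt f (fderiv ℝ f lam) (lam + (0 : ℝ) • v) := by
      simpa using hτ.hasFDerivAt
    exact hfd.comp_hasDerivAt 0 hline
  have htend := hasDerivAt_iff_tendsto_slope.mp hφ
  have hmem' : ∀ t : ℝ, slope (fun t : ℝ => f (lam + t • v)) 0 t ∈ Sw := by
    intro t
    have h1 : ∀ s : ℝ, f (lam + s • v) ∈ Sw := fun s => ⟨τ (lam + s • v), hmem _, rfl⟩
    simp only [slope_def_field, slope, vsub_eq_sub]
    exact Submodule.smul_mem _ _ (sub_mem (h1 t) (h1 0))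
  have hlim : fderiv ℝ f lam v ∈ Sw := by
    refine hclosed.mem_of_tendsto htend ?_
    exact Filter.Eventually.of_forall hmem'
  rcases hlim with ⟨e, he, heq⟩
  unfold pdE
  rw [← hv, ← hf, ← heq]
  simpa using he

theorem aux_pdE_smooth (i : Fin l) (τ : (Fin l → ℝ) → ExteriorAlgebra ℝ g)
    (hτ : ContDiff ℝ (⊤ : ℕ∞) (fun mu => ee (τ mu))) :
    ContDiff ℝ (⊤ : ℕ∞) (fun lam => ee (pdE ee i τ lam)) := by
  have h1 : ContDiff ℝ (⊤ : ℕ∞) (fderiv ℝ (fun mu => ee (τ mu))) :=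
    hτ.fderiv_right (by simp)
  have h2 : ContDiff ℝ (⊤ : ℕ∞) (fun lam => fderiv ℝ (fun mu => ee (τ mu)) lam (Pi.single i 1)) :=
    h1.clm_apply contDiff_const
  have : (fun lam => ee (pdE ee i τ lam))
      = fun lam => fderiv ℝ (fun mu => ee (τ mu)) lam (Pi.single i 1) := by
    funext lam; unfold pdE; rw [ee.apply_symm_apply]
  rw [this]
  exact h2

theorem aux_smooth_linear (T : ExteriorAlgebra ℝ g →ₗ[ℝ] ExteriorAlgebra ℝ g)
    (f : (Fin l → ℝ) → ExteriorAlgebra ℝ g)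
    (hf : ContDiff ℝ (⊤ : ℕ∞) (fun mu => ee (f mu))) :
    ContDiff ℝ (⊤ : ℕ∞) (fun mu => ee (T (f mu))) := by
  haveI := auxWFinDim ee
  let Tc : W →L[ℝ] W :=
    LinearMap.toContinuousLinearMap (ee.toLinearMap ∘ₗ T ∘ₗ ee.symm.toLinearMap)
  have hfun : (fun mu => ee (T (f mu))) = fun mu => Tc (ee (f mu)) := by
    funext mu
    show ee (T (f mu)) = ee (T (ee.symm (ee (f mu))))
    rw [ee.symm_apply_apply]
  rw [hfun]
  exact Tc.contDiff.comp hf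

theorem aux_smooth_bilin (B : ExteriorAlgebra ℝ g →ₗ[ℝ] ExteriorAlgebra ℝ g →ₗ[ℝ] ExteriorAlgebra ℝ g)
    (u v : (Fin l → ℝ) → ExteriorAlgebra ℝ g)
    (hu : ContDiff ℝ (⊤ : ℕ∞) (fun mu => ee (u mu)))
    (hv : ContDiff ℝ (⊤ : ℕ∞) (fun mu => ee (v mu))) :
    ContDiff ℝ (⊤ : ℕ∞) (fun mu => ee (B (u mu) (v mu))) := by
  haveI := auxWFinDim ee
  let Bl : W →ₗ[ℝ] W →ₗ[ℝ] W :=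
    { toFun := fun w => ee.toLinearMap ∘ₗ (B (ee.symm w)) ∘ₗ ee.symm.toLinearMap
      map_add' := by intro w1 w2; ext w; simp
      map_smul' := by intro t w; ext w'; simp }
  let Bc : W →L[ℝ] W →L[ℝ] W :=
    LinearMap.toContinuousLinearMap
      ((LinearMap.toContinuousLinearMap :
        (W →ₗ[ℝ] W) ≃ₗ[ℝ] (W →L[ℝ] W)).toLinearMap ∘ₗ Bl)
  have hfun : (fun mu => ee (B (u mu) (v mu)))
      = fun mu => Bc (ee (u mu)) (ee (v mu)) := by
    funext mu
    show ee (B (u mu) (v mu)) = ee (B (ee.symm (ee (u mu))) (ee.symm (ee (v mu))))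
    rw [ee.symm_apply_apply, ee.symm_apply_apply]
  rw [hfun]
  exact (Bc.isBoundedBilinearMap.contDiff).comp (hu.prodMk hv)

theorem aux_pdE_symm (i j : Fin l) (τ : (Fin l → ℝ) → ExteriorAlgebra ℝ g)
    (hτ : ContDiff ℝ (⊤ : ℕ∞) (fun mu => ee (τ mu))) (lam : Fin l → ℝ) :
    pdE ee i (pdE ee j τ) lam = pdE ee j (pdE ee i τ) lam := by
  set f := fun mu => ee (τ mu) with hf
  have hf1 : ContDiff ℝ (⊤ : ℕ∞) (fderiv ℝ f) := hτ.fderiv_right (by simp)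
  have hkey : ∀ a b : Fin l,
      fderiv ℝ (fun mu => (fderiv ℝ f mu) (Pi.single a 1)) lam (Pi.single b 1)
        = fderiv ℝ (fderiv ℝ f) lam (Pi.single b 1) (Pi.single a 1) := by
    intro a b
    rw [fderiv_clm_apply ((hf1.differentiable (by simp)).differentiableAt)
      (differentiableAt_const _)]
    simp
  have hsymm : IsSymmSndFDerivAt ℝ f lam :=
    hτ.contDiffAt.isSymmSndFDerivAt (by rw [minSmoothness_of_isRCLikeNormedField]; exact WithTop.coe_le_coe.mpr (le_top : (2 : ℕ∞) ≤ ⊤))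
  have e : ∀ (a : Fin l),
      (fun mu => ee (pdE ee a τ mu))
        = fun mu => fderiv ℝ f mu (Pi.single a 1) := by
    intro a
    funext mu
    unfold pdE
    rw [ee.apply_symm_apply]
  have h2 : ∀ a b : Fin l, pdE ee a (pdE ee b τ) lam
      = ee.symm (fderiv ℝ (fderiv ℝ f) lam (Pi.single a 1) (Pi.single b 1)) := by
    intro a b
    show ee.symm (fderiv ℝ (fun mu => ee (pdE ee b τ mu)) lam (Pi.single a 1)) = _
    rw [e b, hkey b a]
  rw [h2 i j, h2 j i, hsymm (Pi.single i 1) (Pi.single j 1)]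

end B

section C
variable {g : Type} [LieRing g] [LieAlgebra ℝ g]
  {br : ExteriorAlgebra ℝ g → ExteriorAlgebra ℝ g → ExteriorAlgebra ℝ g}

local notation "ιE" => (ExteriorAlgebra.ι ℝ : g →ₗ[ℝ] ExteriorAlgebra ℝ g)
local notation "RS" => LinearMap.range (ExteriorAlgebra.ι ℝ : g →ₗ[ℝ] ExteriorAlgebra ℝ g)
local notation "EE" => ExteriorAlgebra ℝ g

theorem aux_hd_iota (x : g) : homogDeg 1 (ιE x) := by
  unfold homogDeg; rw [pow_one]; exact ⟨x, rfl⟩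

theorem aux_hd_one : homogDeg 0 (1 : EE) := by
  unfold homogDeg; rw [pow_zero]; exact Submodule.one_le.mp le_rfl

theorem aux_br_zero_right (hbr : IsSchouten br) (a : EE) : br a 0 = 0 := by
  have h := hbr.smul_right 0 a 0; simpa using h

theorem aux_br_zero_left (hbr : IsSchouten br) (a : EE) : br 0 a = 0 := by
  have h := hbr.smul_left 0 0 a; simpa using h

theorem aux_br_neg_right (hbr : IsSchouten br) (a b : EE) : br a (-b) = -br a b := by
  have h := hbr.smul_right (-1) a b; simpa using h

theorem aux_br_one_right (hbr : IsSchouten br) {p : ℕ} {a : EE} (ha : homogDeg p a) :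
    br a 1 = 0 := by
  rw [hbr.antisymm p 0 a 1 ha aux_hd_one, hbr.one_left, smul_zero]

theorem aux_br_algebraMap_right (hbr : IsSchouten br) {p : ℕ} {a : EE} (ha : homogDeg p a)
    (t : ℝ) : br a (algebraMap ℝ EE t) = 0 := by
  rw [Algebra.algebraMap_eq_smul_one, hbr.smul_right, aux_br_one_right hbr ha, smul_zero]

theorem aux_swap_iota_right (hbr : IsSchouten br) {q : ℕ} {b : EE} (hb : homogDeg q b)
    (y : g) : br b (ιE y) = -br (ιE y) b := by
  rw [hbr.antisymm q 1 b _ hb (aux_hd_iota y)]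
  norm_num

theorem aux_hd_br (hbr : IsSchouten br) {p q m : ℕ} {a b : EE} (ha : homogDeg p a)
    (hb : homogDeg q b) (hm : p + q - 1 = m) : homogDeg m (br a b) := by
  have := hbr.deg p q a b ha hb; rwa [hm] at this

theorem aux_D_leibniz (hbr : IsSchouten br) (x : g) {p : ℕ} {u : EE} (hu : homogDeg p u)
    (c : EE) : br (ιE x) (u * c) = br (ιE x) u * c + u * br (ιE x) c := by
  have h := hbr.leibniz 1 p (ιE x) u c (aux_hd_iota x) hu
  simpa using h

/-- degree-1 Jacobi, inner bracket with `ι y`. -/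
theorem auxL1 (hbr : IsSchouten br) (x y : g) {n : ℕ} {b : EE} (hb : b ∈ RS ^ n) :
    br (ιE x) (br (ιE y) b)
      = br (ιE ⁅x, y⁆) b + br (ιE y) (br (ιE x) b) := by
  induction hb using Submodule.pow_induction_on_left' with
  | algebraMap t =>
    rw [aux_br_algebraMap_right hbr (aux_hd_iota y), aux_br_zero_right hbr,
      aux_br_algebraMap_right hbr (aux_hd_iota ⁅x, y⁆),
      aux_br_algebraMap_right hbr (aux_hd_iota x), aux_br_zero_right hbr, add_zero]
  | add b b' i hb hb' ih ih' =>
    simp only [hbr.add_right, ih, ih']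
    abel
  | mem_mul m hm i b hb ih =>
    obtain ⟨z, rfl⟩ := hm
    have e1 : ∀ (u v : g) (c : EE),
        br (ιE u) (ιE v * c) = ιE ⁅u, v⁆ * c + ιE v * br (ιE u) c := by
      intro u v c
      have h := aux_D_leibniz hbr u (aux_hd_iota v) c
      rwa [hbr.iota_iota] at h
    have jac : (ιE ⁅x, ⁅y, z⁆⁆ : EE) = ιE ⁅⁅x, y⁆, z⁆ + ιE ⁅y, ⁅x, z⁆⁆ := by
      rw [← map_add, ← leibniz_lie]
    simp only [e1, hbr.add_right, ih, jac, add_mul, mul_add]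
    abel

/-- degree-1 Jacobi, general. -/
theorem auxL2 (hbr : IsSchouten br) (x : g) {n : ℕ} {a : EE} (ha : a ∈ RS ^ n)
    {q : ℕ} {b : EE} (hb : b ∈ RS ^ q) :
    br (ιE x) (br b a) = br (br (ιE x) b) a + br b (br (ιE x) a) := by
  induction ha using Submodule.pow_induction_on_left' with
  | algebraMap t =>
    rw [aux_br_algebraMap_right hbr (hb : homogDeg q b), aux_br_zero_right hbr,
      aux_br_algebraMap_right hbr
        (aux_hd_br hbr (aux_hd_iota x) (hb : homogDeg q b) (show 1 + q - 1 = q by omega)),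
      aux_br_algebraMap_right hbr (aux_hd_iota x), aux_br_zero_right hbr, add_zero]
  | add a a' i ha ha' ih ih' =>
    simp only [hbr.add_right, ih, ih']
    abel
  | mem_mul m hm i a ha ih =>
    obtain ⟨y, rfl⟩ := hm
    have hbq : homogDeg q b := hb
    have hDb : homogDeg q (br (ιE x) b) := aux_hd_br hbr (aux_hd_iota x) hbq (by omega)
    have e1 : ∀ (u v : g) (c : EE),
        br (ιE u) (ιE v * c) = ιE ⁅u, v⁆ * c + ιE v * br (ιE u) c := by
      intro u v c
      have h := aux_D_leibniz hbr u (aux_hd_iota v) c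
      rwa [hbr.iota_iota] at h
    have eb : ∀ (v : g) (c : EE), br b (ιE v * c)
        = br b (ιE v) * c + ((-1 : ℝ) ^ (q - 1)) • (ιE v * br b c) := by
      intro v c
      have h := hbr.leibniz q 1 b (ιE v) c hbq (aux_hd_iota v)
      simpa [mul_one] using h
    have eDb : ∀ (v : g) (c : EE), br (br (ιE x) b) (ιE v * c)
        = br (br (ιE x) b) (ιE v) * c + ((-1 : ℝ) ^ (q - 1)) • (ιE v * br (br (ιE x) b) c) := by
      intro v c
      have h := hbr.leibniz q 1 (br (ιE x) b) (ιE v) c hDb (aux_hd_iota v)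
      simpa [mul_one] using h
    have hu : homogDeg q (br b (ιE y)) := aux_hd_br hbr hbq (aux_hd_iota y) (by omega)
    have eDmul : br (ιE x) (br b (ιE y) * a)
        = br (ιE x) (br b (ιE y)) * a + br b (ιE y) * br (ιE x) a :=
      aux_D_leibniz hbr x hu a
    have sw_y : br b (ιE y) = -br (ιE y) b := aux_swap_iota_right hbr hbq y
    have swD_y : br (br (ιE x) b) (ιE y) = -br (ιE y) (br (ιE x) b) :=
      aux_swap_iota_right hbr hDb y
    have sw_xy : br b (ιE ⁅x, y⁆) = -br (ιE ⁅x, y⁆) b := aux_swap_iota_right hbr hbq ⁅x, y⁆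
    have L1y : br (ιE x) (br (ιE y) b)
        = br (ιE ⁅x, y⁆) b + br (ιE y) (br (ιE x) b) := auxL1 hbr x y hb
    -- expand everything
    rw [eb y a, hbr.add_right, hbr.smul_right, e1 x y (br b a), eDmul, eDb y a,
        e1 x y a, hbr.add_right, eb ⁅x, y⁆ a, eb y (br (ιE x) a), ih, sw_y, swD_y, sw_xy]
    have hDneg : br (ιE x) (-br (ιE y) b) = -br (ιE x) (br (ιE y) b) :=
      aux_br_neg_right hbr _ _
    rw [hDneg, L1y]
    simp only [neg_mul, neg_add_rev, smul_add, mul_add, neg_neg, add_mul, neg_smul]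
    abel

theorem aux_br_sub_right (hbr : IsSchouten br) (a u v : EE) :
    br a (u - v) = br a u - br a v := by
  rw [sub_eq_add_neg, hbr.add_right, aux_br_neg_right hbr, ← sub_eq_add_neg]

/-- Jacobi identity with two degree-2 entries. -/
theorem auxL3 (hbr : IsSchouten br) {a b : EE} (ha : homogDeg 2 a) (hb : homogDeg 2 b)
    {n : ℕ} {c : EE} (hc : c ∈ RS ^ n) :
    br a (br b c) = br (br a b) c - br b (br a c) := by
  have hab : homogDeg 3 (br a b) := aux_hd_br hbr ha hb (by omega)
  -- base case at a single ι z
  have base : ∀ z : g, br a (br b (ιE z)) = br (br a b) (ιE z) - br b (br a (ιE z)) := by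
    intro z
    have swb : br b (ιE z) = -br (ιE z) b := aux_swap_iota_right hbr hb z
    have swa : br a (ιE z) = -br (ιE z) a := aux_swap_iota_right hbr ha z
    have swab : br (br a b) (ιE z) = -br (ιE z) (br a b) := aux_swap_iota_right hbr hab z
    have hL2 : br (ιE z) (br a b) = br (br (ιE z) a) b + br a (br (ιE z) b) :=
      auxL2 hbr z (hb : b ∈ RS ^ 2) (ha : a ∈ RS ^ 2)
    have hza : homogDeg 2 (br (ιE z) a) := aux_hd_br hbr (aux_hd_iota z) ha (by omega)
    have sw22 : br (br (ιE z) a) b = br b (br (ιE z) a) := by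
      rw [hbr.antisymm 2 2 _ _ hza hb]; norm_num
    rw [swb, swa, swab, aux_br_neg_right hbr, aux_br_neg_right hbr, hL2, sw22]
    abel
  induction hc using Submodule.pow_induction_on_left' with
  | algebraMap t =>
    rw [aux_br_algebraMap_right hbr hb, aux_br_zero_right hbr,
      aux_br_algebraMap_right hbr hab, aux_br_algebraMap_right hbr ha,
      aux_br_zero_right hbr, sub_zero]
  | add c c' i hc hc' ih ih' =>
    simp only [hbr.add_right, ih, ih']
    abel
  | mem_mul m hm i c hc ih =>
    obtain ⟨z, rfl⟩ := hm
    -- Leibniz expansions: degree 2 against ι z * c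
    have e2 : ∀ (u : EE), homogDeg 2 u → ∀ c' : EE, br u (ιE z * c')
        = br u (ιE z) * c' - ιE z * br u c' := by
      intro u hu c'
      have h := hbr.leibniz 2 1 u (ιE z) c' hu (aux_hd_iota z)
      rw [h]
      norm_num [sub_eq_add_neg]
    have e22 : ∀ (u v : EE), homogDeg 2 u → homogDeg 2 v → ∀ c' : EE, br u (v * c')
        = br u v * c' + v * br u c' := by
      intro u v hu hv c'
      have h := hbr.leibniz 2 2 u v c' hu hv
      rw [h]
      norm_num
    have e3 : br (br a b) (ιE z * c)
        = br (br a b) (ιE z) * c + ιE z * br (br a b) c := by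
      have h := hbr.leibniz 3 1 (br a b) (ιE z) c hab (aux_hd_iota z)
      rw [h]
      norm_num
    have hbz : homogDeg 2 (br b (ιE z)) := aux_hd_br hbr hb (aux_hd_iota z) (by omega)
    have haz : homogDeg 2 (br a (ιE z)) := aux_hd_br hbr ha (aux_hd_iota z) (by omega)
    rw [e2 b hb c, aux_br_sub_right hbr, e22 a (br b (ιE z)) ha hbz c,
      e2 a ha (br b c), ih, base z, e3, e2 a ha c, aux_br_sub_right hbr,
      e22 b (br a (ιE z)) hb haz c, e2 b hb (br a c)]
    simp only [sub_mul, mul_sub, add_mul, mul_add]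
    abel

theorem aux_br_sum_left (hbr : IsSchouten br) {m : ℕ} (f : Fin m → EE) (b : EE) :
    br (∑ i, f i) b = ∑ i, br (f i) b := by
  exact map_sum ((LinearMap.mk₂ ℝ br hbr.add_left hbr.smul_left hbr.add_right
    hbr.smul_right).flip b) f Finset.univ

theorem aux_halving (hbr : IsSchouten br) {a : EE} (ha : homogDeg 2 a)
    {n : ℕ} {c : EE} (hc : c ∈ RS ^ n) :
    br a (br a c) = (1 / 2 : ℝ) • br (br a a) c := by
  have h := auxL3 hbr ha ha hc
  have h2 : br a (br a c) + br a (br a c) = br (br a a) c := by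
    nth_rewrite 1 [h]
    abel
  have h3 : (2 : ℝ) • br a (br a c) = br (br a a) c := by
    rw [two_smul]; exact h2
  rw [← h3, smul_smul]
  norm_num

/-- extraction of `ι h` from the first slot. -/
theorem auxL4 (hbr : IsSchouten br) {k : ℕ} {s τ : EE} (hs : homogDeg 2 s)
    (hτ : τ ∈ RS ^ k) (h : g) (hinv : br (ιE h) τ = 0) :
    br (ιE h * s) τ = ιE h * br s τ := by
  have hτh : homogDeg k τ := hτ
  have hhs : homogDeg 3 (ιE h * s) := by
    unfold homogDeg
    have : (3 : ℕ) = 1 + 2 := by omega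
    rw [this, pow_add, pow_one]
    exact Submodule.mul_mem_mul ⟨h, rfl⟩ hs
  have h1 : br (ιE h * s) τ = (-(-1 : ℝ) ^ ((3 - 1) * (k - 1))) • br τ (ιE h * s) :=
    hbr.antisymm 3 k _ _ hhs hτh
  have hsign1 : (-(-1 : ℝ) ^ ((3 - 1) * (k - 1))) = -1 := by
    have e : (3 - 1) * (k - 1) = 2 * (k - 1) := by norm_num
    rw [e, pow_mul]
    norm_num
  have h2 : br τ (ιE h) = 0 := by
    rw [aux_swap_iota_right hbr hτh, hinv, neg_zero]
  have h3 : br τ (ιE h * s) = br τ (ιE h) * s + ((-1 : ℝ) ^ ((k - 1) * 1)) • (ιE h * br τ s) :=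
    hbr.leibniz k 1 τ (ιE h) s hτh (aux_hd_iota h)
  have h4 : br τ s = (-(-1 : ℝ) ^ ((k - 1) * (2 - 1))) • br s τ :=
    hbr.antisymm k 2 τ s hτh hs
  rw [h1, hsign1, h3, h2, zero_mul, zero_add, h4]
  have ek : (k - 1) * 1 = k - 1 := Nat.mul_one _
  rw [ek, mul_smul_comm, smul_smul, smul_smul]
  have hsc : (-1 : ℝ) * (-1) ^ (k - 1) * -(-1) ^ (k - 1) = 1 := by
    rw [mul_assoc, mul_neg, ← pow_add]
    have hev : Even ((k - 1) + (k - 1)) := ⟨k - 1, rfl⟩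
    rw [hev.neg_one_pow]
    ring
  rw [hsc, one_smul]

theorem aux_br_neg_left (hbr : IsSchouten br) (a b : EE) : br (-a) b = -br a b := by
  have h := hbr.smul_left (-1) a b; simpa using h

theorem aux_br_sum_right (hbr : IsSchouten br) {m : ℕ} (a : EE) (f : Fin m → EE) :
    br a (∑ i, f i) = ∑ i, br a (f i) :=
  map_sum (LinearMap.mk₂ ℝ br hbr.add_left hbr.smul_left hbr.add_right hbr.smul_right a)
    f Finset.univ

theorem aux_br2_mul (hbr : IsSchouten br) {u : EE} (hu : homogDeg 2 u) (z : g) (c : EE) :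
    br u (ιE z * c) = br u (ιE z) * c - ιE z * br u c := by
  have h := hbr.leibniz 2 1 u (ιE z) c hu (aux_hd_iota z)
  rw [h]
  norm_num [sub_eq_add_neg]

end C

/-- For a triangular dynamical r-matrix `r`, the operator
`δ_r τ = Σᵢ hᵢ ∧ ∂τ/∂λⁱ + [r, τ]` maps `C^∞(h*, (∧^k g)^h)` to
`C^∞(h*, (∧^{k+1} g)^h)` and satisfies `δ_r² = 0`. -/
theorem deltaR_well_defined_and_squares_to_zero
    {g : Type} [LieRing g] [LieAlgebra ℝ g] [FiniteDimensional ℝ g]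
    {W : Type} [NormedAddCommGroup W] [NormedSpace ℝ W]
    (ee : ExteriorAlgebra ℝ g ≃ₗ[ℝ] W) {l : ℕ}
    (H : LieSubalgebra ℝ g)
    (hab : ∀ x ∈ H, ∀ y ∈ H, ⁅x, y⁆ = (0 : g))
    (hb : Fin l → g) (hbmem : ∀ i, hb i ∈ H)
    (hbspan : Submodule.span ℝ (Set.range hb) = H.toSubmodule)
    (hbind : LinearIndependent ℝ hb)
    (br : ExteriorAlgebra ℝ g → ExteriorAlgebra ℝ g → ExteriorAlgebra ℝ g)
    (hbr : IsSchouten br)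
    -- `r` is a triangular dynamical r-matrix:
    (r : (Fin l → ℝ) → ExteriorAlgebra ℝ g)
    (hrdeg : ∀ lam, homogDeg 2 (r lam))
    (hrsm : ContDiff ℝ (⊤ : ℕ∞) fun lam => ee (r lam))
    (hrzw : ∀ (lam : Fin l → ℝ), ∀ x ∈ H, br (ExteriorAlgebra.ι ℝ x) (r lam) = 0)
    (hrcdybe : ∀ lam : Fin l → ℝ,
      (∑ i, ExteriorAlgebra.ι ℝ (hb i) * pdE ee i r lam)
        + (1 / 2 : ℝ) • br (r lam) (r lam) = 0)
    -- `τ ∈ C^∞(h*, (∧^k g)^h)`: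
    (k : ℕ) (τ : (Fin l → ℝ) → ExteriorAlgebra ℝ g)
    (hτdeg : ∀ lam, homogDeg k (τ lam))
    (hτsm : ContDiff ℝ (⊤ : ℕ∞) fun lam => ee (τ lam))
    (hτinv : ∀ (lam : Fin l → ℝ), ∀ x ∈ H,
      br (ExteriorAlgebra.ι ℝ x) (τ lam) = 0) :
    (∀ lam, homogDeg (k + 1) (deltaR ee hb br r τ lam)) ∧
    ContDiff ℝ (⊤ : ℕ∞) (fun lam => ee (deltaR ee hb br r τ lam)) ∧
    (∀ (lam : Fin l → ℝ), ∀ x ∈ H,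
      br (ExteriorAlgebra.ι ℝ x) (deltaR ee hb br r τ lam) = 0) ∧
    (∀ lam : Fin l → ℝ, deltaR ee hb br r (deltaR ee hb br r τ) lam = 0) := by
  classical
  haveI hEfd : FiniteDimensional ℝ (ExteriorAlgebra ℝ g) := auxExtFinDim
  haveI hWfd : FiniteDimensional ℝ W := auxWFinDim ee
  set ιg := (ExteriorAlgebra.ι ℝ : g →ₗ[ℝ] ExteriorAlgebra ℝ g) with hιg
  set RS := LinearMap.range (ExteriorAlgebra.ι ℝ : g →ₗ[ℝ] ExteriorAlgebra ℝ g) with hRS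
  set brL := LinearMap.mk₂ ℝ br hbr.add_left hbr.smul_left hbr.add_right hbr.smul_right
    with hbrL
  -- differentiability facts
  have hτd : ∀ lam, DifferentiableAt ℝ (fun mu => ee (τ mu)) lam :=
    fun lam => (hτsm.differentiable (by simp)).differentiableAt
  have hrd : ∀ lam, DifferentiableAt ℝ (fun mu => ee (r mu)) lam :=
    fun lam => (hrsm.differentiable (by simp)).differentiableAt
  have hpdτ_mem : ∀ (i : Fin l) lam, pdE ee i τ lam ∈ RS ^ k :=
    fun i lam => aux_pdE_mem ee (RS ^ k) i τ lam (hτd lam) hτdeg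
  have hpdr_mem : ∀ (i : Fin l) lam, pdE ee i r lam ∈ RS ^ 2 :=
    fun i lam => aux_pdE_mem ee (RS ^ 2) i r lam (hrd lam) hrdeg
  have hpdτ_sm : ∀ i : Fin l, ContDiff ℝ (⊤ : ℕ∞) (fun lam => ee (pdE ee i τ lam)) :=
    fun i => aux_pdE_smooth ee i τ hτsm
  have hmul_sm : ∀ i : Fin l,
      ContDiff ℝ (⊤ : ℕ∞) (fun lam => ee (ιg (hb i) * pdE ee i τ lam)) := by
    intro i
    have h := aux_smooth_linear ee (LinearMap.mulLeft ℝ (ιg (hb i)))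
      (fun lam => pdE ee i τ lam) (hpdτ_sm i)
    simpa using h
  have hbr_sm : ContDiff ℝ (⊤ : ℕ∞) (fun lam => ee (br (r lam) (τ lam))) := by
    have h := aux_smooth_bilin ee brL r τ hrsm hτsm
    simpa [hbrL] using h
  refine ⟨?_, ?_, ?_, ?_⟩
  · -- degree k+1
    intro lam
    unfold deltaR homogDeg
    refine Submodule.add_mem _ ?_ ?_
    · refine Submodule.sum_mem _ ?_
      intro i _
      rw [pow_succ']
      exact Submodule.mul_mem_mul ⟨hb i, rfl⟩ (hpdτ_mem i lam)
    · exact aux_hd_br hbr (hrdeg lam) (hτdeg lam) (by omega)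
  · -- smoothness
    have he : (fun lam => ee (deltaR ee hb br r τ lam))
        = fun lam => (∑ i, ee (ιg (hb i) * pdE ee i τ lam)) + ee (br (r lam) (τ lam)) := by
      funext lam
      unfold deltaR
      rw [map_add, map_sum]
    rw [he]
    exact (ContDiff.sum fun i _ => hmul_sm i).add hbr_sm
  · -- invariance
    intro lam x hx
    unfold deltaR
    rw [hbr.add_right]
    have hface : ∀ i : Fin l, br (ιg x) (ιg (hb i) * pdE ee i τ lam) = 0 := by
      intro i
      rw [aux_D_leibniz hbr x (aux_hd_iota (hb i)) _]
      have h0 : br (ιg x) (ιg (hb i)) = 0 := by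
        rw [hbr.iota_iota, hab x hx (hb i) (hbmem i), map_zero]
      have h1 : br (ιg x) (pdE ee i τ lam) = 0 := by
        have hfun : (fun mu => (brL (ιg x)) (τ mu))
            = fun _ => (0 : ExteriorAlgebra ℝ g) := by
          funext mu
          simpa [hbrL] using hτinv mu x hx
        calc br (ιg x) (pdE ee i τ lam) = brL (ιg x) (pdE ee i τ lam) := rfl
          _ = pdE ee i (fun mu => brL (ιg x) (τ mu)) lam :=
              (aux_pdE_linear ee (brL (ιg x)) i τ lam (hτd lam)).symm
          _ = pdE ee i (fun _ => (0 : ExteriorAlgebra ℝ g)) lam := by rw [hfun]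
          _ = 0 := aux_pdE_const_zero ee i lam
      rw [h0, h1, zero_mul, mul_zero, add_zero]
    have hsum0 : br (ιg x) (∑ i, ιg (hb i) * pdE ee i τ lam) = 0 := by
      rw [aux_br_sum_right hbr]
      exact Finset.sum_eq_zero fun i _ => hface i
    have hbr0 : br (ιg x) (br (r lam) (τ lam)) = 0 := by
      rw [auxL2 hbr x (hτdeg lam) (hrdeg lam), hrzw lam x hx, hτinv lam x hx,
        aux_br_zero_left hbr, aux_br_zero_right hbr, add_zero]
    rw [hsum0, hbr0, add_zero]
  · -- δ² = 0
    intro lam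
    have hδsum_d : ∀ j : Fin l,
        DifferentiableAt ℝ (fun mu => ee (ιg (hb j) * pdE ee j τ mu)) lam :=
      fun j => ((hmul_sm j).differentiable (by simp)).differentiableAt
    have hδbr_d : DifferentiableAt ℝ (fun mu => ee (br (r mu) (τ mu))) lam :=
      (hbr_sm.differentiable (by simp)).differentiableAt
    have hSumd : DifferentiableAt ℝ
        (fun mu => ee (∑ j, ιg (hb j) * pdE ee j τ mu)) lam := by
      have h : (fun mu => ee (∑ j, ιg (hb j) * pdE ee j τ mu))
          = fun mu => ∑ j, ee (ιg (hb j) * pdE ee j τ mu) := by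
        funext mu; rw [map_sum]
      rw [h]
      exact DifferentiableAt.fun_sum fun j _ => hδsum_d j
    have hpd : ∀ i : Fin l, pdE ee i (deltaR ee hb br r τ) lam
        = (∑ j, ιg (hb j) * pdE ee i (pdE ee j τ) lam)
          + (br (pdE ee i r lam) (τ lam) + br (r lam) (pdE ee i τ lam)) := by
      intro i
      have e0 : pdE ee i (deltaR ee hb br r τ) lam
          = pdE ee i (fun mu => (∑ j, ιg (hb j) * pdE ee j τ mu) + br (r mu) (τ mu)) lam :=
        rfl
      rw [e0, aux_pdE_add ee i _ _ lam hSumd hδbr_d]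
      congr 1
      · rw [aux_pdE_sum ee i _ lam (fun j => hδsum_d j)]
        refine Finset.sum_congr rfl fun j _ => ?_
        have h := aux_pdE_linear ee (LinearMap.mulLeft ℝ (ιg (hb j))) i (pdE ee j τ) lam
          (((hpdτ_sm j).differentiable (by simp)).differentiableAt)
        simpa using h
      · have h := aux_pdE_bilin ee brL i r τ lam (hrd lam) (hτd lam)
        simpa [hbrL] using h
    -- term 1 vanishes by symmetry of second derivatives
    have hsymm : ∀ i j : Fin l, pdE ee i (pdE ee j τ) lam = pdE ee j (pdE ee i τ) lam :=
      fun i j => aux_pdE_symm ee i j τ hτsm lam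
    have hT1 : (∑ i, ∑ j, ιg (hb i) * (ιg (hb j) * pdE ee i (pdE ee j τ) lam)) = 0 := by
      set S2 : Fin l → Fin l → ExteriorAlgebra ℝ g :=
        fun i j => ιg (hb i) * (ιg (hb j) * pdE ee i (pdE ee j τ) lam) with hS2
      have hA : ∀ i j, S2 i j + S2 j i = 0 := by
        intro i j
        have h1 : S2 j i = ιg (hb j) * (ιg (hb i) * pdE ee i (pdE ee j τ) lam) := by
          rw [hS2]
          simp only []
          rw [hsymm j i]
        rw [h1, hS2]
        simp only []
        rw [← mul_assoc, ← mul_assoc, ← add_mul, ExteriorAlgebra.ι_add_mul_swap, zero_mul]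
      have hrowsum : ∀ i, ((∑ j, S2 i j) + ∑ j, S2 j i) = 0 := by
        intro i
        rw [← Finset.sum_add_distrib]
        exact Finset.sum_eq_zero fun j _ => hA i j
      have hdouble : (∑ i, ∑ j, S2 i j) + (∑ i, ∑ j, S2 i j) = 0 := by
        nth_rewrite 2 [Finset.sum_comm]
        rw [← Finset.sum_add_distrib]
        exact Finset.sum_eq_zero fun i _ => hrowsum i
      have h2 : (2 : ℝ) • (∑ i, ∑ j, S2 i j) = 0 := by
        rw [two_smul]; exact hdouble
      rcases smul_eq_zero.mp h2 with h | h
      · norm_num at h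
      · exact h
    have hT2 : (∑ i, ιg (hb i) * br (pdE ee i r lam) (τ lam))
        = -((1 / 2 : ℝ) • br (br (r lam) (r lam)) (τ lam)) := by
      have h1 : ∀ i : Fin l, ιg (hb i) * br (pdE ee i r lam) (τ lam)
          = br (ιg (hb i) * pdE ee i r lam) (τ lam) :=
        fun i => (auxL4 hbr (hpdr_mem i lam) (hτdeg lam) (hb i)
          (hτinv lam (hb i) (hbmem i))).symm
      rw [Finset.sum_congr rfl fun i _ => h1 i, ← aux_br_sum_left hbr]
      have h2 : (∑ i, ιg (hb i) * pdE ee i r lam)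
          = -((1 / 2 : ℝ) • br (r lam) (r lam)) :=
        eq_neg_of_add_eq_zero_left (hrcdybe lam)
      rw [h2, aux_br_neg_left hbr, hbr.smul_left]
    have hT4 : br (r lam) (∑ j, ιg (hb j) * pdE ee j τ lam)
        = -∑ i, ιg (hb i) * br (r lam) (pdE ee i τ lam) := by
      rw [aux_br_sum_right hbr]
      have h1 : ∀ j : Fin l, br (r lam) (ιg (hb j) * pdE ee j τ lam)
          = -(ιg (hb j) * br (r lam) (pdE ee j τ lam)) := by
        intro j
        rw [aux_br2_mul hbr (hrdeg lam) (hb j) _]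
        have h0 : br (r lam) (ιg (hb j)) = 0 := by
          rw [aux_swap_iota_right hbr (hrdeg lam), hrzw lam (hb j) (hbmem j), neg_zero]
        rw [h0, zero_mul, zero_sub]
      rw [Finset.sum_congr rfl fun j _ => h1 j, Finset.sum_neg_distrib]
    have hT5 : br (r lam) (br (r lam) (τ lam))
        = (1 / 2 : ℝ) • br (br (r lam) (r lam)) (τ lam) :=
      aux_halving hbr (hrdeg lam) (hτdeg lam)
    have step1 : deltaR ee hb br r (deltaR ee hb br r τ) lam
        = (∑ i, ιg (hb i) * pdE ee i (deltaR ee hb br r τ) lam)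
          + br (r lam) (deltaR ee hb br r τ lam) := rfl
    have hδlam : deltaR ee hb br r τ lam
        = (∑ j, ιg (hb j) * pdE ee j τ lam) + br (r lam) (τ lam) := rfl
    have hsum2 : (∑ i, ιg (hb i) * pdE ee i (deltaR ee hb br r τ) lam)
        = ∑ i, ιg (hb i) * ((∑ j, ιg (hb j) * pdE ee i (pdE ee j τ) lam)
          + (br (pdE ee i r lam) (τ lam) + br (r lam) (pdE ee i τ lam))) := by
      refine Finset.sum_congr rfl fun i _ => ?_
      rw [hpd i]
    rw [step1, hsum2, hδlam, hbr.add_right, hT4, hT5]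
    simp only [mul_add, Finset.mul_sum, Finset.sum_add_distrib]
    rw [hT1, hT2]
    abel
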